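/- arXiv:0907.5583 — 2 statements merged into one kernel-verified Lean document; each statement's English description precedes it below -/
import Mathlib

section
/- Let g and g' be symmetric positive definite real n×n matrices. Then there exists a unique real n×n matrix P which is self-adjoint with respect to g (i.e. g·P = Pᵀ·g) and positive definite with respect to g (i.e. xᵀ·g·P·x > 0 for every nonzero x ∈ ℝⁿ) such that g' = Pᵀ·g·P. (This is the Riemannian case of the theorem stating that the orthogonal reductions of the frame bundle determined by two metrics of the same signature are isomorphic: the congruence g' = Sᵀ·g·S can be realized by the unique positive factor P of the polar decomposition of S.) -/
/-!
Write `g = R * R` with `R` the positive square root of `g`. The bijection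
`P ↦ T = R * P * R⁻¹` turns `g * P` into the congruent matrix `R⁻¹ * (g * P) * R⁻¹ = T`, so `P`
is `g`-self-adjoint and `g`-positive exactly when `T` is positive definite, and then
`g' = Pᵀ * g * P` reads `T * T = R⁻¹ * g' * R⁻¹`. So `T`, hence `P`, is determined as the unique
positive square root of the positive definite matrix `R⁻¹ * g' * R⁻¹`.
-/

open Matrix
open scoped MatrixOrder ComplexOrder

namespace Matrix

variable {n : Type*} [Fintype n]

theorem posDef_iff_transpose_eq_and_dotProduct_mulVec_pos {A : Matrix n n ℝ} :
    A.PosDef ↔ Aᵀ = A ∧ ∀ x : n → ℝ, x ≠ 0 → 0 < x ⬝ᵥ A *ᵥ x := by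
  simp [posDef_iff_dotProduct_mulVec, IsHermitian, conjTranspose_eq_transpose_of_trivial]

theorem posDef_mul_iff_of_transpose_eq {g P : Matrix n n ℝ} (hg : gᵀ = g) :
    (g * P).PosDef ↔
      g * P = Pᵀ * g ∧ ∀ x : n → ℝ, x ≠ 0 → 0 < x ⬝ᵥ (g * P) *ᵥ x := by
  rw [posDef_iff_transpose_eq_and_dotProduct_mulVec_pos, transpose_mul, hg, eq_comm]

variable [DecidableEq n]

theorem PosDef.existsUnique_posDef_mul_self_eq {𝕜 : Type*} [RCLike 𝕜] {A : Matrix n n 𝕜}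
    (hA : A.PosDef) : ∃! R, R.PosDef ∧ R * R = A := by
  refine ⟨CFC.sqrt A,
    ⟨hA.isStrictlyPositive.sqrt.posDef, CFC.sqrt_mul_sqrt_self A hA.posSemidef.nonneg⟩, ?_⟩
  rintro R ⟨hR, hRR⟩
  exact (CFC.sqrt_unique hRR hR.posSemidef.nonneg).symm

theorem bijective_mul_mul_nonsing_inv {α : Type*} [CommRing α] {R : Matrix n n α}
    (hR : IsUnit R) : Function.Bijective fun P => R * P * R⁻¹ := by
  have hR' := (isUnit_iff_isUnit_det R).mp hR
  refine Function.bijective_iff_has_inverse.mpr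
    ⟨fun T => R⁻¹ * T * R, fun P => ?_, fun T => ?_⟩ <;> simp [mul_assoc, hR']

variable {R : Matrix n n ℝ}

theorem posDef_nonsing_inv_mul_mul_nonsing_inv_iff (hR : IsUnit R) (hRt : Rᵀ = R)
    (A : Matrix n n ℝ) : (R⁻¹ * A * R⁻¹).PosDef ↔ A.PosDef := by
  have hRinv : star R⁻¹ = R⁻¹ := by
    rw [star_eq_conjTranspose, conjTranspose_eq_transpose_of_trivial, transpose_nonsing_inv, hRt]
  simpa only [hRinv] using
    (isUnit_nonsing_inv_iff.mpr hR).posDef_star_left_conjugate_iff (x := A)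

theorem posDef_mul_self_mul_iff (hR : IsUnit R) (hRt : Rᵀ = R) (P : Matrix n n ℝ) :
    (R * R * P).PosDef ↔ (R * P * R⁻¹).PosDef := by
  rw [← posDef_nonsing_inv_mul_mul_nonsing_inv_iff hR hRt, mul_assoc R,
    nonsing_inv_mul_cancel_left _ _ ((isUnit_iff_isUnit_det R).mp hR)]

theorem eq_transpose_mul_mul_self_mul_iff (hR : IsUnit R) (hRt : Rᵀ = R) (P G : Matrix n n ℝ) :
    G = Pᵀ * (R * R) * P ↔ (R * P * R⁻¹)ᵀ * (R * P * R⁻¹) = R⁻¹ * G * R⁻¹ := by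
  have hRinv := isUnit_nonsing_inv_iff.mpr hR
  have hconj : (R * P * R⁻¹)ᵀ * (R * P * R⁻¹) = R⁻¹ * (Pᵀ * (R * R) * P) * R⁻¹ := by
    simp only [transpose_mul, transpose_nonsing_inv, hRt, mul_assoc]
  rw [hconj, hRinv.mul_left_inj, hRinv.mul_right_inj, eq_comm]

end Matrix

/-- Riemannian case: given two symmetric positive definite matrices `g`, `g'`
(two metrics in a common frame), there is a unique matrix `P` which is
`g`-self-adjoint and `g`-positive definite with `g' = Pᵀ * g * P`. -/
theorem metrics_related_by_unique_positive_factor (n : ℕ)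
    (g g' : Matrix (Fin n) (Fin n) ℝ)
    (hg_symm : gᵀ = g)
    (hg_pos : ∀ x : Fin n → ℝ, x ≠ 0 → 0 < x ⬝ᵥ g.mulVec x)
    (hg'_symm : g'ᵀ = g')
    (hg'_pos : ∀ x : Fin n → ℝ, x ≠ 0 → 0 < x ⬝ᵥ g'.mulVec x) :
    ∃! P : Matrix (Fin n) (Fin n) ℝ,
      g * P = Pᵀ * g ∧
      (∀ x : Fin n → ℝ, x ≠ 0 → 0 < x ⬝ᵥ (g * P).mulVec x) ∧
      g' = Pᵀ * g * P := by
  have hg := posDef_iff_transpose_eq_and_dotProduct_mulVec_pos.mpr ⟨hg_symm, hg_pos⟩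
  have hg' := posDef_iff_transpose_eq_and_dotProduct_mulVec_pos.mpr ⟨hg'_symm, hg'_pos⟩
  obtain ⟨R, hR, rfl⟩ := hg.existsUnique_posDef_mul_self_eq.exists
  have hRt : Rᵀ = R := (posDef_iff_transpose_eq_and_dotProduct_mulVec_pos.mp hR).1
  have hM : (R⁻¹ * g' * R⁻¹).PosDef :=
    (posDef_nonsing_inv_mul_mul_nonsing_inv_iff hR.isUnit hRt g').mpr hg'
  refine (existsUnique_congr fun P => ?_).mpr <|
    (bijective_mul_mul_nonsing_inv hR.isUnit).existsUnique_iff.mp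
      hM.existsUnique_posDef_mul_self_eq
  rw [← and_assoc, ← posDef_mul_iff_of_transpose_eq hg_symm, posDef_mul_self_mul_iff hR.isUnit hRt,
    eq_transpose_mul_mul_self_mul_iff hR.isUnit hRt]
  exact and_congr_right fun hT => by
    rw [(posDef_iff_transpose_eq_and_dotProduct_mulVec_pos.mp hT).1]
end

section
/- Fix N ∈ ℝ and on ℝ³ define the 1-forms E¹(p)(v) = v₁, E²(p)(v) = v₂, E³(p)(v) = v₃ + N·p₁·v₂. Define the antisymmetric connection 1-forms ω^a{}_b (a,b ∈ {1,2,3}, ω^a{}_b = −ω^b{}_a) by ω¹₂ = −(N/2)E³, ω¹₃ = −(N/2)E², ω²₃ = (N/2)E¹. Then the torsionless condition holds: for each a ∈ {1,2,3} and all p, u, v ∈ ℝ³, dE^a(p)(u,v) + Σ_b (ω^a{}_b ∧ E^b)(p)(u,v) = 0. (Thus ω is the Levi–Civita connection of the twisted metric ds'² = dx² + dy² + (dz + N x dy)².) -/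
noncomputable section

/-- Exterior derivative of a 1-form on `ℝ^m`. -/
def exd {m : ℕ} (η : (Fin m → ℝ) → ((Fin m → ℝ) →L[ℝ] ℝ))
    (p u v : Fin m → ℝ) : ℝ :=
  (fderiv ℝ η p u) v - (fderiv ℝ η p v) u

/-- Wedge product of two 1-forms on `ℝ^m`. -/
def wedge {m : ℕ} (η ξ : (Fin m → ℝ) → ((Fin m → ℝ) →L[ℝ] ℝ))
    (p u v : Fin m → ℝ) : ℝ :=
  η p u * ξ p v - η p v * ξ p u

/-- The twisted vielbein `E¹ = dx`, `E² = dy`, `E³ = dz + N x dy`. -/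
def E (N : ℝ) : Fin 3 → (Fin 3 → ℝ) → ((Fin 3 → ℝ) →L[ℝ] ℝ) :=
  ![fun _ => ContinuousLinearMap.proj 0,
    fun _ => ContinuousLinearMap.proj 1,
    fun p => ContinuousLinearMap.proj 2 + (N * p 0) • ContinuousLinearMap.proj 1]

/-- The antisymmetric connection 1-forms `ω¹₂ = −(N/2)E³`, `ω¹₃ = −(N/2)E²`,
`ω²₃ = (N/2)E¹` (indices `1,2,3` realized as `0,1,2 : Fin 3`). -/
def ω (N : ℝ) : Fin 3 → Fin 3 → (Fin 3 → ℝ) → ((Fin 3 → ℝ) →L[ℝ] ℝ) :=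
  ![![fun _ => 0, fun p => (-(N / 2)) • E N 2 p, fun p => (-(N / 2)) • E N 1 p],
    ![fun p => (N / 2) • E N 2 p, fun _ => 0, fun p => (N / 2) • E N 0 p],
    ![fun p => (N / 2) • E N 1 p, fun p => (-(N / 2)) • E N 0 p, fun _ => 0]]

/-! E¹ and E² are constant, hence closed, while E³ = dz + (N·x) dy has dE³ = N dx ∧ dy;
with these, each torsion component is a polynomial identity in the coordinates of u and v. -/

lemma exd_const {m : ℕ} (c : (Fin m → ℝ) →L[ℝ] ℝ) (p u v : Fin m → ℝ) :
    exd (fun _ => c) p u v = 0 := by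
  simp [exd]

lemma exd_const_add_linear_smul {m : ℕ} (c ℓ μ : (Fin m → ℝ) →L[ℝ] ℝ) (p u v : Fin m → ℝ) :
    exd (fun q => c + ℓ q • μ) p u v = wedge (fun _ => ℓ) (fun _ => μ) p u v := by
  have hderiv : HasFDerivAt (fun q => c + ℓ q • μ) (ℓ.smulRight μ) p :=
    (ℓ.hasFDerivAt.smul_const μ).const_add c
  simp [exd, wedge, hderiv.fderiv]

lemma E_two_eq (N : ℝ) :
    E N 2 = fun q => .proj 2 + (N • ContinuousLinearMap.proj (R := ℝ) (φ := fun _ : Fin 3 => ℝ) 0) q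
      • .proj 1 := by
  ext
  simp [E]

lemma exd_E_zero (N : ℝ) (p u v : Fin 3 → ℝ) : exd (E N 0) p u v = 0 :=
  exd_const _ p u v

lemma exd_E_one (N : ℝ) (p u v : Fin 3 → ℝ) : exd (E N 1) p u v = 0 :=
  exd_const _ p u v

lemma exd_E_two (N : ℝ) (p u v : Fin 3 → ℝ) :
    exd (E N 2) p u v = N * (u 0 * v 1 - v 0 * u 1) := by
  rw [E_two_eq, exd_const_add_linear_smul]
  simp only [wedge, FunLike.coe_smul, Pi.smul_apply, ContinuousLinearMap.proj_apply, smul_eq_mul]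
  ring

/-- The torsionless condition `dE^a + ω^a{}_b ∧ E^b = 0` holds for the twisted
vielbein `E` and the connection `ω`: thus `ω` is the Levi–Civita connection of
the twisted metric `ds'² = dx² + dy² + (dz + N x dy)²`. -/
theorem twisted_torus_levi_civita (N : ℝ) (a : Fin 3) (p u v : Fin 3 → ℝ) :
    exd (E N a) p u v + ∑ b : Fin 3, wedge (ω N a b) (E N b) p u v = 0 := by
  fin_cases a <;>
  · simp [exd_E_zero, exd_E_one, exd_E_two, Fin.sum_univ_three, wedge, ω]
    simp [E]
    ring

end
end
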